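/- For every 3SAT formula φ on n boolean variables (n even, n ≥ 4), every diametral path of G(φ) contains all the vertices V₁,…,V_{2n}, contains, for each i with 1 ≤ i ≤ n, exactly one of the two literal vertices X_i and X̄_i, and contains no clause vertex and no internal vertex of a clause-connecting path. -/

import Mathlib

open SimpleGraph

/-- Vertices of the graph `G(φ)` associated with a 3SAT formula `φ` with `m` clauses over `n`
boolean variables (`n` even):
* `lit i b` is the literal vertex `X_{i+1}` (if `b = true`) or `X̄_{i+1}` (if `b = false`);
* `chain k` is the vertex `V_{k+1}` of the two pending chains `V₁ — ⋯ — V_n` and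
  `V_{n+1} — ⋯ — V_{2n}`;
* `clause j` is the vertex of the clause `C_{j+1}`;
* `inner j t s` is the `(s+1)`-st internal vertex of the path of length `n/2 + 1` (with `n/2`
  internal vertices) joining the clause vertex `C_{j+1}` to the vertex of its `(t+1)`-st
  literal. -/
inductive Vert (n m : ℕ) : Type
  | lit : Fin n → Bool → Vert n m
  | chain : Fin (2 * n) → Vert n m
  | clause : Fin m → Vert n m
  | inner : Fin m → Fin 3 → Fin (n / 2) → Vert n m
  deriving DecidableEq

/-- The base (asymmetric) adjacency relation of `G(φ)`, where the 3SAT formula `φ` assigns to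
each clause index `j` and each slot `t ∈ {0,1,2}` a literal `φ j t = (i, b)` (variable index
`i`, polarity `b`):
* `X_i` and `X̄_i` are adjacent, and every vertex of `{X_i, X̄_i}` is adjacent to every vertex
  of `{X_{i+1}, X̄_{i+1}}`;
* `V₁ — ⋯ — V_n` and `V_{n+1} — ⋯ — V_{2n}` are paths, `V_n` is moreover adjacent to both
  `X₁, X̄₁` and `V_{n+1}` to both `X_n, X̄_n`;
* each clause vertex `C_j` is joined to the vertex of each of its literals by a path of length
  `n/2 + 1` whose `n/2` internal vertices are the `inner j t s`. -/
def satRel (n m : ℕ) (φ : Fin m → Fin 3 → Fin n × Bool) : Vert n m → Vert n m → Prop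
  | .lit i b, .lit i' b' => (i = i' ∧ b ≠ b') ∨ (i : ℕ) + 1 = (i' : ℕ)
  | .chain k, .chain k' => (k : ℕ) + 1 = (k' : ℕ) ∧ (k' : ℕ) ≠ n
  | .chain k, .lit i _ => ((k : ℕ) = n - 1 ∧ (i : ℕ) = 0) ∨ ((k : ℕ) = n ∧ (i : ℕ) = n - 1)
  | .clause j, .inner j' _ s => j = j' ∧ (s : ℕ) = 0
  | .inner j t s, .inner j' t' s' => j = j' ∧ t = t' ∧ (s : ℕ) + 1 = (s' : ℕ)
  | .inner j t s, .lit i b => (s : ℕ) = n / 2 - 1 ∧ φ j t = (i, b)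
  | _, _ => False

/-- The graph `G(φ)` associated with a 3SAT formula `φ`. -/
def Gphi (n m : ℕ) (φ : Fin m → Fin 3 → Fin n × Bool) : SimpleGraph (Vert n m) :=
  SimpleGraph.fromRel (satRel n m φ)

/-!
The lower bound comes from a potential: `startPotential φ` is 1-Lipschitz and vanishes at `V₁`,
its mirror image `endPotential φ` is 1-Lipschitz and vanishes at `V_{2n}`, and their sum is
`3n - 1` on chain and literal vertices but at least `3n` on the clause gadgets. Hence
`d(V₁, V_{2n}) ≥ 3n - 1`, and on a walk of length `3n - 1` from `V₁` to `V_{2n}` every vertex `x`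
sits exactly at position `startPotential φ x`: gadget vertices cannot occur, the chain vertex of
potential `ℓ` is the vertex at position `ℓ`, and position `n + i` is the only place for a literal
vertex of `x_{i+1}`.

For the upper bound, explicit walks to the hubs `X₁` and `X_n` give
`2 d(u, v) ≤ S u + S v`, where `S x = hubBound φ x + hubBound (reflectFormula φ) x.reflect` bounds
`d(x, X₁) + d(x, X_n)`, and `S ≤ 3n - 1` with equality only at `V₁` and `V_{2n}`. So the diameter
is `3n - 1`, attained only by the pair `{V₁, V_{2n}}`. Mirroring the graph (`i ↦ n + 1 - i`,
together with `φ`) carries every bound at one end to the other.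
-/

namespace SimpleGraph

variable {V : Type*} {G : SimpleGraph V}

theorem Walk.apply_le_apply_add_length {f : V → ℕ} (hf : ∀ x y, G.Adj x y → f y ≤ f x + 1)
    {u v : V} (p : G.Walk u v) : f v ≤ f u + p.length := by
  induction p with
  | nil => simp
  | cons h _ ih => have := hf _ _ h; simp only [Walk.length_cons]; omega

theorem Walk.apply_getVert_le_add {f : V → ℕ} (hf : ∀ x y, G.Adj x y → f y ≤ f x + 1)
    {u v : V} (p : G.Walk u v) (ℓ : ℕ) : f (p.getVert ℓ) ≤ f u + ℓ := by
  have := (p.take ℓ).apply_le_apply_add_length hf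
  rw [Walk.take_length] at this
  omega

theorem Walk.apply_getVert_le_add_length_sub {g : V → ℕ} (hg : ∀ x y, G.Adj x y → g y ≤ g x + 1)
    {u v : V} (p : G.Walk u v) (ℓ : ℕ) : g (p.getVert ℓ) ≤ g v + (p.length - ℓ) := by
  have := (p.drop ℓ).reverse.apply_le_apply_add_length hg
  rwa [Walk.length_reverse, Walk.drop_length] at this

theorem edist_le_of_exists_adj_lt (r : V → ℕ) {c : V}
    (hr : ∀ x ≠ c, ∃ y, G.Adj x y ∧ r y < r x) (x : V) : G.edist x c ≤ r x := by
  induction hx : r x using Nat.strong_induction_on generalizing x with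
  | _ k ih =>
    by_cases hxc : x = c
    · simp [hxc]
    obtain ⟨y, hxy, hy⟩ := hr x hxc
    calc G.edist x c ≤ G.edist x y + G.edist y c := SimpleGraph.edist_triangle
      _ ≤ 1 + r y := add_le_add (edist_eq_one_iff_adj.2 hxy).le (ih _ (hx ▸ hy) y rfl)
      _ ≤ k := by norm_cast; omega

theorem Hom.edist_le {V' : Type*} {G' : SimpleGraph V'} (f : G →g G') (u v : V) :
    G'.edist (f u) (f v) ≤ G.edist u v := by
  by_cases h : G.Reachable u v
  · obtain ⟨p, hp⟩ := h.exists_walk_length_eq_edist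
    rw [← hp, ← Walk.length_map f p]
    exact SimpleGraph.edist_le _
  · simp [edist_eq_top_of_not_reachable h]

end SimpleGraph

namespace Gphi

variable {n m : ℕ} {φ : Fin m → Fin 3 → Fin n × Bool}

theorem adj_iff {x y : Vert n m} :
    (Gphi n m φ).Adj x y ↔ x ≠ y ∧ (satRel n m φ x y ∨ satRel n m φ y x) :=
  fromRel_adj _ _ _

theorem satRel_irrefl (x : Vert n m) : ¬satRel n m φ x x := by
  cases x <;> simp [satRel]

theorem adj_of_satRel {x y : Vert n m} (h : satRel n m φ x y) : (Gphi n m φ).Adj x y :=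
  adj_iff.2 ⟨by rintro rfl; exact satRel_irrefl x h, Or.inl h⟩

def _root_.Vert.reflect : Vert n m → Vert n m
  | .lit i b => .lit i.rev b
  | .chain k => .chain k.rev
  | .clause j => .clause j
  | .inner j t s => .inner j t s

@[simp]
theorem _root_.Vert.reflect_reflect (x : Vert n m) : x.reflect.reflect = x := by
  cases x <;> simp [Vert.reflect]

def reflectFormula (φ : Fin m → Fin 3 → Fin n × Bool) : Fin m → Fin 3 → Fin n × Bool :=
  fun j t => ((φ j t).1.rev, (φ j t).2)

@[simp]
theorem reflectFormula_reflectFormula (φ : Fin m → Fin 3 → Fin n × Bool) :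
    reflectFormula (reflectFormula φ) = φ := by
  funext j t
  simp [reflectFormula]

theorem satRel_reflect {x y : Vert n m} (h : satRel n m φ x y) :
    satRel n m (reflectFormula φ) x.reflect y.reflect ∨
      satRel n m (reflectFormula φ) y.reflect x.reflect := by
  cases x <;> cases y <;>
    simp only [satRel, Vert.reflect, reflectFormula, Fin.ext_iff, Fin.val_rev, Prod.ext_iff] at h ⊢
  all_goals grind

@[simps]
def reflectHom (φ : Fin m → Fin 3 → Fin n × Bool) :
    Gphi n m φ →g Gphi n m (reflectFormula φ) where
  toFun := Vert.reflect
  map_rel' {x y} h := by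
    rw [adj_iff] at h ⊢
    refine ⟨fun hxy => h.1 (by simpa using congrArg Vert.reflect hxy), ?_⟩
    rcases h.2 with h | h
    · exact satRel_reflect h
    · exact (satRel_reflect h).symm

-- On a clause path the potential is the smaller of the two ways in: from its own literal, or
-- through the clause vertex, which is reached at best from `X₁` in `n / 2 + 1` steps.
def startPotential (φ : Fin m → Fin 3 → Fin n × Bool) : Vert n m → ℕ
  | .lit i _ => n + i
  | .chain k => if (k : ℕ) < n then k else k + n
  | .clause _ => n + n / 2 + 1
  | .inner j t s => n + min ((φ j t).1 + (n / 2 - s)) (n / 2 + 2 + s)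

def endPotential (φ : Fin m → Fin 3 → Fin n × Bool) (x : Vert n m) : ℕ :=
  startPotential (reflectFormula φ) x.reflect

theorem startPotential_le_of_satRel {x y : Vert n m} (h : satRel n m φ x y) :
    startPotential φ y ≤ startPotential φ x + 1 ∧ startPotential φ x ≤ startPotential φ y + 1 := by
  cases x <;> cases y <;>
    simp only [satRel, startPotential, Fin.ext_iff, Prod.ext_iff] at h ⊢ <;> grind

theorem startPotential_le_of_adj {x y : Vert n m} (h : (Gphi n m φ).Adj x y) :
    startPotential φ y ≤ startPotential φ x + 1 := by
  rcases (adj_iff.1 h).2 with h | h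
  · exact (startPotential_le_of_satRel h).1
  · exact (startPotential_le_of_satRel h).2

theorem endPotential_le_of_adj {x y : Vert n m} (h : (Gphi n m φ).Adj x y) :
    endPotential φ y ≤ endPotential φ x + 1 :=
  startPotential_le_of_adj ((reflectHom φ).map_adj h)

section Potentials

variable (φ)

theorem three_mul_sub_one_le_potential_add (x : Vert n m) :
    3 * n - 1 ≤ startPotential φ x + endPotential φ x := by
  cases x <;>
    simp only [endPotential, startPotential, Vert.reflect, reflectFormula, Fin.val_rev] <;> grind

theorem three_mul_le_potential_add_clause (j : Fin m) :
    3 * n ≤ startPotential φ (.clause j) + endPotential φ (.clause j) := by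
  simp only [endPotential, startPotential, Vert.reflect]
  omega

theorem three_mul_le_potential_add_inner (j : Fin m) (t : Fin 3) (s : Fin (n / 2)) :
    3 * n ≤ startPotential φ (.inner j t s) + endPotential φ (.inner j t s) := by
  simp only [endPotential, startPotential, Vert.reflect, reflectFormula, Fin.val_rev]
  grind

theorem eq_chain_of_potential_add_eq {x : Vert n m} {k : Fin (2 * n)}
    (hx : startPotential φ x + endPotential φ x = 3 * n - 1)
    (hk : startPotential φ x = startPotential φ (.chain k)) : x = .chain k := by
  cases x <;> simp only [endPotential, startPotential, Vert.reflect, reflectFormula, Fin.val_rev,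
    Vert.chain.injEq, Fin.ext_iff] at hx hk ⊢ <;> grind

theorem exists_lit_of_potential_add_eq {x : Vert n m} {i : Fin n}
    (hx : startPotential φ x + endPotential φ x = 3 * n - 1)
    (hi : startPotential φ x = n + i) : ∃ b, x = .lit i b := by
  cases x <;> simp only [endPotential, startPotential, Vert.reflect, reflectFormula, Fin.val_rev,
    Vert.lit.injEq, Fin.ext_iff] at hx hi ⊢ <;> grind

end Potentials

def litBound (i : Fin n) (b : Bool) : ℕ :=
  if (i : ℕ) = 0 ∧ b = false then 1 else i

def hubBound (φ : Fin m → Fin 3 → Fin n × Bool) : Vert n m → ℕ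
  | .lit i b => litBound i b
  | .chain k => if (k : ℕ) < n then n - k else k
  | .clause j => n / 2 + 1 + litBound (φ j 0).1 (φ j 0).2
  | .inner j t s => n / 2 - s + litBound (φ j t).1 (φ j t).2

section Hub

variable (φ)

theorem exists_adj_hubBound_lt (hn : 2 ≤ n) (x : Vert n m) (hx : x ≠ .lit ⟨0, by omega⟩ true) :
    ∃ y, (Gphi n m φ).Adj x y ∧ hubBound φ y < hubBound φ x := by
  rcases x with ⟨i, b⟩ | k | j | ⟨j, t, s⟩
  · by_cases hi : (i : ℕ) = 0
    · have hb : b = false := by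
        by_contra hb
        exact hx (by simp_all [Fin.ext_iff])
      refine ⟨.lit i true, adj_of_satRel (Or.inl ⟨rfl, by simp [hb]⟩), ?_⟩
      simp [hubBound, litBound, hi, hb]
    · have hrel : satRel n m φ (.lit ⟨i - 1, by omega⟩ true) (.lit i b) := Or.inr (by simp; omega)
      refine ⟨_, (adj_of_satRel hrel).symm, ?_⟩
      simp only [hubBound, litBound]
      grind
  · have hk := k.isLt
    by_cases hkn : (k : ℕ) < n
    · by_cases hk1 : (k : ℕ) + 1 < n
      · refine ⟨.chain ⟨k + 1, by omega⟩, adj_of_satRel ⟨rfl, by simp; omega⟩, ?_⟩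
        simp only [hubBound]
        grind
      · refine ⟨.lit ⟨0, by omega⟩ true, adj_of_satRel (Or.inl ⟨by omega, rfl⟩), ?_⟩
        simp [hubBound, litBound, hkn]
    · by_cases hk1 : (k : ℕ) = n
      · refine ⟨.lit ⟨n - 1, by omega⟩ true, adj_of_satRel (Or.inr ⟨hk1, rfl⟩), ?_⟩
        simp only [hubBound, litBound]
        grind
      · have hrel : satRel n m φ (.chain ⟨k - 1, by omega⟩) (.chain k) := ⟨by simp; omega, hk1⟩
        refine ⟨_, (adj_of_satRel hrel).symm, ?_⟩
        simp only [hubBound]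
        grind
  · refine ⟨.inner j 0 ⟨0, by omega⟩, adj_of_satRel ⟨rfl, rfl⟩, ?_⟩
    simp only [hubBound]
    omega
  · have hs := s.isLt
    by_cases hs1 : (s : ℕ) + 1 < n / 2
    · refine ⟨.inner j t ⟨s + 1, hs1⟩, adj_of_satRel ⟨rfl, rfl, rfl⟩, ?_⟩
      simp only [hubBound]
      omega
    · refine ⟨.lit (φ j t).1 (φ j t).2, adj_of_satRel ⟨by omega, rfl⟩, ?_⟩
      simp only [hubBound]
      omega

theorem edist_le_hubBound (hn : 2 ≤ n) (x : Vert n m) :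
    (Gphi n m φ).edist x (.lit ⟨0, by omega⟩ true) ≤ hubBound φ x :=
  edist_le_of_exists_adj_lt (hubBound φ) (exists_adj_hubBound_lt φ hn) x

theorem edist_le_hubBound_reflect (hn : 2 ≤ n) (x : Vert n m) :
    (Gphi n m φ).edist x (.lit ⟨n - 1, by omega⟩ true) ≤ hubBound (reflectFormula φ) x.reflect := by
  have h := (reflectHom (reflectFormula φ)).edist_le x.reflect (.lit ⟨0, by omega⟩ true)
  simp only [reflectHom_apply, Vert.reflect_reflect, reflectFormula_reflectFormula] at h
  exact h.trans (edist_le_hubBound _ hn _)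

theorem hubBound_add_hubBound_reflect_le (h4 : 4 ≤ n) (x : Vert n m) :
    hubBound φ x + hubBound (reflectFormula φ) x.reflect ≤ 3 * n - 1 := by
  cases x <;> simp only [hubBound, litBound, Vert.reflect, reflectFormula, Fin.val_rev] <;> grind

theorem eq_end_of_le_hubBound_add (h4 : 4 ≤ n) (x : Vert n m)
    (hx : 3 * n - 1 ≤ hubBound φ x + hubBound (reflectFormula φ) x.reflect) :
    x = .chain ⟨0, by omega⟩ ∨ x = .chain ⟨2 * n - 1, by omega⟩ := by
  cases x <;> simp only [hubBound, litBound, Vert.reflect, reflectFormula, Fin.val_rev,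
    Vert.chain.injEq, Fin.ext_iff] at hx ⊢ <;> grind

end Hub

section Diameter

variable (φ)

theorem connected (hn : 2 ≤ n) : (Gphi n m φ).Connected := by
  have : Nonempty (Vert n m) := ⟨.lit ⟨0, by omega⟩ true⟩
  have hub (x : Vert n m) : (Gphi n m φ).Reachable x (.lit ⟨0, by omega⟩ true) :=
    reachable_of_edist_ne_top <|
      ne_top_of_le_ne_top (ENat.natCast_ne_top _) (edist_le_hubBound φ hn x)
  exact ⟨fun u v => (hub u).trans (hub v).symm⟩

theorem two_mul_dist_le (h4 : 4 ≤ n) (u v : Vert n m) :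
    2 * (Gphi n m φ).dist u v ≤ (hubBound φ u + hubBound (reflectFormula φ) u.reflect) +
      (hubBound φ v + hubBound (reflectFormula φ) v.reflect) := by
  have hG := connected φ (by omega)
  have dist_le {x y : Vert n m} {k : ℕ} (h : (Gphi n m φ).edist x y ≤ k) :
      (Gphi n m φ).dist x y ≤ k := by
    rw [← (hG.preconnected x y).coe_dist_eq_edist] at h
    exact_mod_cast h
  have hP := hG.dist_triangle (u := u) (v := .lit ⟨0, by omega⟩ true) (w := v)
  have hQ := hG.dist_triangle (u := u) (v := .lit ⟨n - 1, by omega⟩ true) (w := v)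
  have hPu := dist_le (edist_le_hubBound φ (by omega) u)
  have hPv := dist_le (edist_le_hubBound φ (by omega) v)
  have hQu := dist_le (edist_le_hubBound_reflect φ (by omega) u)
  have hQv := dist_le (edist_le_hubBound_reflect φ (by omega) v)
  rw [dist_comm] at hPv hQv
  omega

theorem dist_le_three_mul_sub_one (h4 : 4 ≤ n) (u v : Vert n m) :
    (Gphi n m φ).dist u v ≤ 3 * n - 1 := by
  have := two_mul_dist_le φ h4 u v
  have := hubBound_add_hubBound_reflect_le φ h4 u
  have := hubBound_add_hubBound_reflect_le φ h4 v
  omega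

-- The hypothesis stays behind the arrow so that the `by omega` proofs in the statement do not
-- capture it (and with it `u`, `v`), which would block `subst` on the conclusion.
theorem eq_ends_of_three_mul_sub_one_le_dist (h4 : 4 ≤ n) {u v : Vert n m} :
    3 * n - 1 ≤ (Gphi n m φ).dist u v →
    (u = .chain ⟨0, by omega⟩ ∧ v = .chain ⟨2 * n - 1, by omega⟩) ∨
      (u = .chain ⟨2 * n - 1, by omega⟩ ∧ v = .chain ⟨0, by omega⟩) := by
  intro h
  have := two_mul_dist_le φ h4 u v
  have := hubBound_add_hubBound_reflect_le φ h4 u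
  have := hubBound_add_hubBound_reflect_le φ h4 v
  have huv : u ≠ v := by rintro rfl; simp at h; omega
  rcases eq_end_of_le_hubBound_add φ h4 u (by omega) with hu | hu <;>
    rcases eq_end_of_le_hubBound_add φ h4 v (by omega) with hv | hv
  · exact absurd (hu.trans hv.symm) huv
  · exact .inl ⟨hu, hv⟩
  · exact .inr ⟨hu, hv⟩
  · exact absurd (hu.trans hv.symm) huv

theorem three_mul_sub_one_le_length (hn : 1 ≤ n)
    (p : (Gphi n m φ).Walk (.chain ⟨0, by omega⟩) (.chain ⟨2 * n - 1, by omega⟩)) :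
    3 * n - 1 ≤ p.length := by
  have := p.apply_le_apply_add_length (fun _ _ => startPotential_le_of_adj)
  simp only [startPotential] at this
  split_ifs at this <;> omega

theorem diam_eq (h4 : 4 ≤ n) : (Gphi n m φ).diam = 3 * n - 1 := by
  have hG := connected φ (by omega)
  have hdiam : (Gphi n m φ).ediam ≤ (3 * n - 1 : ℕ) := ediam_le_of_edist_le fun u v => by
    rw [← (hG.preconnected u v).coe_dist_eq_edist]
    exact_mod_cast dist_le_three_mul_sub_one φ h4 u v
  obtain ⟨p, hp⟩ :=
    hG.exists_walk_length_eq_dist (.chain ⟨0, by omega⟩) (.chain ⟨2 * n - 1, by omega⟩)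
  refine le_antisymm (ENat.toNat_le_of_le_natCast hdiam) ?_
  calc 3 * n - 1 ≤ p.length := three_mul_sub_one_le_length φ (by omega) p
    _ = _ := hp
    _ ≤ _ := dist_le_diam (ne_top_of_le_ne_top (ENat.natCast_ne_top _) hdiam)

end Diameter

section DiametralWalk

variable {u v : Vert n m}

theorem potential_getVert_of_length_eq {p : (Gphi n m φ).Walk u v} (hu : startPotential φ u = 0)
    (hv : endPotential φ v = 0) (hp : p.length = 3 * n - 1) {ℓ : ℕ} (hℓ : ℓ ≤ 3 * n - 1) :
    startPotential φ (p.getVert ℓ) = ℓ ∧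
      startPotential φ (p.getVert ℓ) + endPotential φ (p.getVert ℓ) = 3 * n - 1 := by
  have hstart := p.apply_getVert_le_add (fun _ _ => startPotential_le_of_adj) ℓ
  have hend := p.apply_getVert_le_add_length_sub (fun _ _ => endPotential_le_of_adj) ℓ
  have := three_mul_sub_one_le_potential_add φ (p.getVert ℓ)
  omega

theorem potential_of_mem_support {p : (Gphi n m φ).Walk u v} (hu : startPotential φ u = 0)
    (hv : endPotential φ v = 0) (hp : p.length = 3 * n - 1) {x : Vert n m} (hx : x ∈ p.support) :
    startPotential φ x + endPotential φ x = 3 * n - 1 ∧ p.getVert (startPotential φ x) = x := by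
  obtain ⟨ℓ, rfl, hℓ⟩ := Walk.mem_support_iff_exists_getVert.1 hx
  obtain ⟨hstart, hsum⟩ := potential_getVert_of_length_eq hu hv hp (hp ▸ hℓ)
  exact ⟨hsum, by rw [hstart]⟩

theorem support_of_length_eq_three_mul_sub_one (hn : 1 ≤ n)
    (p : (Gphi n m φ).Walk (.chain ⟨0, by omega⟩) (.chain ⟨2 * n - 1, by omega⟩))
    (hp : p.length = 3 * n - 1) :
    (∀ k : Fin (2 * n), Vert.chain k ∈ p.support) ∧
    (∀ i : Fin n, Xor' (Vert.lit i true ∈ p.support) (Vert.lit i false ∈ p.support)) ∧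
    (∀ j : Fin m, Vert.clause j ∉ p.support) ∧
    (∀ (j : Fin m) (t : Fin 3) (s : Fin (n / 2)), Vert.inner j t s ∉ p.support) := by
  have hu : startPotential φ (.chain ⟨0, by omega⟩) = 0 := by simp [startPotential]
  have hv : endPotential φ (.chain ⟨2 * n - 1, by omega⟩) = 0 := by
    simp only [endPotential, startPotential, Vert.reflect, Fin.val_rev]
    split_ifs <;> omega
  refine ⟨fun k => ?_, fun i => ?_, fun j hj => ?_, fun j t s hjts => ?_⟩
  · have hk : startPotential φ (.chain k) ≤ 3 * n - 1 := by
      simp only [startPotential]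
      split_ifs <;> omega
    obtain ⟨hstart, hsum⟩ := potential_getVert_of_length_eq hu hv hp hk
    rw [← eq_chain_of_potential_add_eq φ hsum hstart]
    exact p.getVert_mem_support _
  · obtain ⟨hstart, hsum⟩ := potential_getVert_of_length_eq hu hv hp (ℓ := n + i) (by omega)
    obtain ⟨b, hb⟩ := exists_lit_of_potential_add_eq φ hsum hstart
    have hmem : ∀ b', Vert.lit i b' ∈ p.support ↔ b' = b := fun b' =>
      ⟨fun h => by
        have h' := (potential_of_mem_support hu hv hp h).2
        simp only [startPotential] at h'
        simpa using h'.symm.trans hb,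
        fun h => h ▸ hb ▸ p.getVert_mem_support _⟩
    cases b <;> simp [hmem, Xor']
  · have := three_mul_le_potential_add_clause φ j
    have := (potential_of_mem_support hu hv hp hj).1
    omega
  · have := three_mul_le_potential_add_inner φ j t s
    have := (potential_of_mem_support hu hv hp hjts).1
    omega

end DiametralWalk

end Gphi

theorem Gphi_diametral_path_structure_general (n m : ℕ) (h4 : 4 ≤ n)
    (φ : Fin m → Fin 3 → Fin n × Bool)
    (u v : Vert n m) (p : (Gphi n m φ).Walk u v)
    (hshort : p.length = (Gphi n m φ).dist u v)
    (hdiam : (Gphi n m φ).dist u v = (Gphi n m φ).diam) :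
    (∀ k : Fin (2 * n), Vert.chain k ∈ p.support) ∧
    (∀ i : Fin n, Xor' (Vert.lit i true ∈ p.support) (Vert.lit i false ∈ p.support)) ∧
    (∀ j : Fin m, Vert.clause j ∉ p.support) ∧
    (∀ (j : Fin m) (t : Fin 3) (s : Fin (n / 2)), Vert.inner j t s ∉ p.support) := by
  have hlen : p.length = 3 * n - 1 := by rw [hshort, hdiam, Gphi.diam_eq φ h4]
  rcases Gphi.eq_ends_of_three_mul_sub_one_le_dist φ h4 (hlen.symm.trans hshort).le with
    ⟨rfl, rfl⟩ | ⟨rfl, rfl⟩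
  · exact Gphi.support_of_length_eq_three_mul_sub_one (by omega) p hlen
  · have hrev := Gphi.support_of_length_eq_three_mul_sub_one (by omega) p.reverse
      (by rwa [Walk.length_reverse])
    simpa only [Walk.support_reverse, List.mem_reverse] using hrev

/-- For every 3SAT formula `φ` on `n` boolean variables (`n` even, `n ≥ 4`), every diametral
path of `G(φ)` contains all the vertices `V₁, …, V_{2n}`, contains exactly one of the two
literal vertices `X_i`, `X̄_i` for each `i`, and contains no clause vertex and no internal
vertex of a clause-connecting path. -/
theorem Gphi_diametral_path_structure (n m : ℕ) (hn : Even n) (h4 : 4 ≤ n)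
    (φ : Fin m → Fin 3 → Fin n × Bool)
    (u v : Vert n m) (p : (Gphi n m φ).Walk u v)
    (hshort : p.length = (Gphi n m φ).dist u v)
    (hdiam : (Gphi n m φ).dist u v = (Gphi n m φ).diam) :
    (∀ k : Fin (2 * n), Vert.chain k ∈ p.support) ∧
    (∀ i : Fin n, Xor' (Vert.lit i true ∈ p.support) (Vert.lit i false ∈ p.support)) ∧
    (∀ j : Fin m, Vert.clause j ∉ p.support) ∧
    (∀ (j : Fin m) (t : Fin 3) (s : Fin (n / 2)), Vert.inner j t s ∉ p.support) :=
  Gphi_diametral_path_structure_general n m h4 φ u v p hshort hdiam
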